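/- For every n ≥ 1, X̃_n(1,1) = (1/2)·(n−1)(n−2)·(n−1)!; as an integer identity, 2·X̃_n(1,1) = (n−1)·(n−2)·(n−1)!. -/

import Mathlib

/-!
Only the lines `h = n + 1` and `h = n + 2` of the recursion are involved. On the line
`h = n + 1` the coefficient `2(h - 1 - n)` vanishes and the term at `h - 2 = n - 1` lies below
the support, so `X_n(n+1, p)` is `n!` for `p = 0` and `0` otherwise. Along `h = n + 2` the
recursion then becomes a first-order linear recurrence in `n`, first for `p = 0` and then for
`p = 1`, which the closed forms satisfy.
-/

/-- Refined counting numbers `Xtab n h p`: `Xtab 1 2 0 = 1`, zero off `(2,0)` at `n = 1`, and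
`Xtab n h p = (2n+1-h)·(Xtab (n-1) (h-2) p + Xtab (n-1) (h-1) p) + 2(h-1-n)·Xtab (n-1) (h-1) (p-1)`
for `n ≥ 2`.  `Xtab n h p` counts generalized tree-like tableaux of size `n`, half-perimeter `h`,
with exactly `p` off-diagonal points attached to a diagonal point. -/
def Xtab : ℕ → ℤ → ℤ → ℤ
  | 0, _, _ => 0
  | 1, h, p => if h = 2 ∧ p = 0 then 1 else 0
  | n + 2, h, p =>
      (2 * ((n : ℤ) + 2) + 1 - h) * (Xtab (n + 1) (h - 2) p + Xtab (n + 1) (h - 1) p)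
        + 2 * (h - 1 - ((n : ℤ) + 2)) * Xtab (n + 1) (h - 1) (p - 1)

lemma Xtab_succ {n : ℕ} (hn : 1 ≤ n) (h p : ℤ) :
    Xtab (n + 1) h p
      = (2 * ((n : ℤ) + 1) + 1 - h) * (Xtab n (h - 2) p + Xtab n (h - 1) p)
        + 2 * (h - 1 - ((n : ℤ) + 1)) * Xtab n (h - 1) (p - 1) := by
  obtain ⟨m, rfl⟩ := Nat.exists_eq_add_of_le' hn
  rw [Xtab]
  push_cast
  ring_nf

lemma Xtab_of_neg (n : ℕ) (h : ℤ) {p : ℤ} (hp : p < 0) : Xtab n h p = 0 := by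
  induction n generalizing h p with
  | zero => rfl
  | succ n ih =>
    rcases Nat.eq_zero_or_pos n with rfl | hn
    · simp [Xtab, hp.ne]
    · rw [Xtab_succ hn, ih _ hp, ih _ hp, ih _ (by omega)]
      ring

lemma Xtab_of_le {n : ℕ} {h : ℤ} (p : ℤ) (hh : h ≤ n) : Xtab n h p = 0 := by
  induction n generalizing h p with
  | zero => rfl
  | succ n ih =>
    rcases Nat.eq_zero_or_pos n with rfl | hn
    · simp only [Xtab, ite_eq_right_iff]
      omega
    · push_cast at hh
      rw [Xtab_succ hn, ih _ (by omega), ih _ (by omega), ih _ (by omega)]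
      ring

lemma Xtab_add_one_of_pos (n : ℕ) {p : ℤ} (hp : 0 < p) : Xtab n ((n : ℤ) + 1) p = 0 := by
  induction n with
  | zero => rfl
  | succ n ih =>
    rcases Nat.eq_zero_or_pos n with rfl | hn
    · simp [Xtab, hp.ne']
    · rw [Xtab_succ hn]
      push_cast
      rw [show (n : ℤ) + 1 + 1 - 2 = n by ring, show (n : ℤ) + 1 + 1 - 1 = n + 1 by ring,
        Xtab_of_le p le_rfl, ih]
      ring

lemma Xtab_add_one_zero {n : ℕ} (hn : 1 ≤ n) : Xtab n ((n : ℤ) + 1) 0 = n.factorial := by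
  induction n, hn using Nat.le_induction with
  | base => simp [Xtab]
  | succ n hn ih =>
    rw [Xtab_succ hn]
    push_cast
    rw [show (n : ℤ) + 1 + 1 - 2 = n by ring, show (n : ℤ) + 1 + 1 - 1 = n + 1 by ring,
      Xtab_of_le 0 le_rfl, ih, Nat.factorial_succ]
    push_cast
    ring

lemma two_mul_Xtab_add_two_zero {n : ℕ} (hn : 1 ≤ n) :
    2 * Xtab n ((n : ℤ) + 2) 0 = ((n : ℤ) - 1) * n.factorial := by
  induction n, hn using Nat.le_induction with
  | base => simp [Xtab]
  | succ n hn ih =>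
    rw [Xtab_succ hn]
    push_cast
    rw [show (n : ℤ) + 1 + 2 - 2 = n + 1 by ring, show (n : ℤ) + 1 + 2 - 1 = n + 2 by ring,
      Xtab_add_one_zero hn, Xtab_of_neg _ _ neg_one_lt_zero, Nat.factorial_succ]
    push_cast
    linear_combination (n : ℤ) * ih

/-- For every n ≥ 1, 2·X̃_n(1,1) = (n−1)·(n−2)·(n−1)!, where X̃_n(1,1) := X_n(n+2, 1). -/
theorem stmt15 (n : ℕ) (hn : 1 ≤ n) :
    2 * Xtab n ((n : ℤ) + 2) 1
      = ((n : ℤ) - 1) * ((n : ℤ) - 2) * (Nat.factorial (n - 1) : ℤ) := by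
  induction n, hn using Nat.le_induction with
  | base => simp [Xtab]
  | succ n hn ih =>
    have hfact : (n.factorial : ℤ) = n * (n - 1).factorial := by
      exact_mod_cast (Nat.mul_factorial_pred (by omega : n ≠ 0)).symm
    rw [Xtab_succ hn, Nat.add_sub_cancel]
    push_cast
    rw [show (n : ℤ) + 1 + 2 - 2 = n + 1 by ring, show (n : ℤ) + 1 + 2 - 1 = n + 2 by ring,
      Xtab_add_one_of_pos n one_pos]
    linear_combination (n : ℤ) * ih + 2 * two_mul_Xtab_add_two_zero hn
      - ((n : ℤ) - 1) * ((n : ℤ) - 2) * hfact
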